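/- arXiv:1803.06470 — 4 statements merged into one kernel-verified Lean document; each statement's English description precedes it below -/
import Mathlib

section
/- If r₀ = 0 then r₁ = 0 (i.e., the quantity r₁ vanishes on the zero locus of the polynomial r₀ from equation (1) of the paper). -/
/-!
Writing `x = s ^ (2 * n)`, all four quantities are polynomials in `m`, `s`, `x`, and `r₁` is a
multiple of `r₀` in `ℤ[m, s, x]`: `r₁ = cofactor * r₀`, with the cofactor obtained by dividing
`r₁` by `r₀`.
-/

namespace Pretzel

variable {R : Type*} [CommRing R]

-- In the definitions below `x` stands for `s ^ (2 * n)`.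

def alpha (m s x : R) : R :=
  (s ^ 2 - 1) * x *
    (-(m ^ 6) * (s - 1) * s ^ 2 * (s * x + 1)
      + m ^ 4 * (s ^ 2 * x * (s ^ 4 - 2 * s ^ 2 + 3 * s - 1) + s ^ 4 - 3 * s ^ 3 + 2 * s ^ 2 - 1)
      - m ^ 2 * s * (x * (2 * s ^ 3 - s ^ 2 + 1) - s * (s ^ 3 - s + 2))
      + s ^ 2 * (x - s ^ 2))

def beta (m s x : R) : R :=
  m ^ 7 * s ^ 2 * x * (s ^ 2 - 1) * (s ^ 3 + 1)
    - m ^ 5 * (s ^ 3 * x ^ 2 * (s ^ 3 - s ^ 2 + 1)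
        + s * x * (s - 1) * (s ^ 3 + s + 1) * (s ^ 3 + s ^ 2 + 1)
        - s ^ 3 * (s ^ 3 - s + 1))
    + m ^ 3 * s ^ 2 * (s ^ 3 + 1) * (x - 1) * (x + s ^ 2)
    - m * s ^ 3 * (x - s ^ 2) * (x + s)

def r0 (m s x : R) : R :=
  m ^ 8 * (s - 1) * (s + 1) ^ 2 * (x - s ^ 2) * s ^ 2 * x
    - m ^ 6 * (s ^ 3 * x ^ 3
        + (2 * s ^ 6 + s ^ 5 - 4 * s ^ 4 + s ^ 3 + s ^ 2 - s - 1) * s * x ^ 2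
        - (s ^ 6 + s ^ 5 - s ^ 4 - s ^ 3 + 4 * s ^ 2 - s - 2) * s ^ 2 * x
        + s ^ 6)
    + m ^ 4 * ((s ^ 2 + 1) * s ^ 2 * x ^ 3
        + (s ^ 6 + 2 * s ^ 5 - 3 * s ^ 4 - 2 * s ^ 3 + 6 * s ^ 2 - 4 * s - 2) * s ^ 3 * x ^ 2
        - (2 * s ^ 6 + 4 * s ^ 5 - 6 * s ^ 4 + 2 * s ^ 3 + 3 * s ^ 2 - 2 * s - 1) * x
        + (s ^ 2 + 1) * s ^ 5)
    - m ^ 2 * (s ^ 3 * x ^ 3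
        + (2 * s ^ 6 + s ^ 5 - 4 * s ^ 4 + s ^ 3 + s ^ 2 - s - 1) * s * x ^ 2
        - (s ^ 6 + s ^ 5 - s ^ 4 - s ^ 3 + 4 * s ^ 2 - s - 2) * s ^ 2 * x
        + s ^ 6)
    + (s - 1) * (s + 1) ^ 2 * (x - s ^ 2) * s ^ 2 * x

def r1 (m s x a b : R) : R :=
  -(a ^ 2) * m * s * (m ^ 2 * s ^ 2 * x - m ^ 2 - s * x + s)
    + a * b * (m ^ 2 - 1) * (m ^ 2 + 1) * s * x * (s + 1)
    + b ^ 2 * m * x * (m ^ 2 * s * x - m ^ 2 * s - s ^ 2 * x + 1)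

def cofactor (m s x : R) : R :=
  m * s * x *
    (s ^ 4 * x ^ 2 - (s ^ 6 - s ^ 3) * x - s ^ 5
      + m ^ 2 * ((-2 * s ^ 6 + s ^ 5 - 2 * s ^ 3) * x ^ 2
          + (s ^ 7 - 2 * s ^ 5 + 2 * s ^ 4 - s ^ 2) * x
          + (2 * s ^ 6 - s ^ 4 + 2 * s ^ 3))
      + m ^ 4 * ((s ^ 8 - s ^ 6 + 2 * s ^ 5 + s ^ 2) * x ^ 2
          + (-s ^ 8 + 4 * s ^ 7 - 6 * s ^ 5 + 6 * s ^ 4 - 4 * s ^ 2 + s) * x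
          + (-s ^ 7 - 2 * s ^ 4 + s ^ 3 - s))
      + m ^ 6 * ((-s ^ 9 + 2 * s ^ 8 - s ^ 7 - 2 * s ^ 6 + 2 * s ^ 5 - s ^ 3) * x ^ 2
          + (-s ^ 8 - s ^ 6 - s ^ 5 + s ^ 4 + s ^ 3 + s) * x
          + (s ^ 6 - 2 * s ^ 4 + 2 * s ^ 3 + s ^ 2 - 2 * s + 1))
      + m ^ 8 * (s ^ 7 - s ^ 5 + s ^ 4 - s ^ 2) * x)

theorem r1_eq_cofactor_mul_r0 (m s x : R) :
    r1 m s x (alpha m s x) (beta m s x) = cofactor m s x * r0 m s x := by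
  unfold r1 alpha beta cofactor r0
  ring

end Pretzel

open Pretzel in
theorem pretzel_stmt3_general (n : ℕ) (hn : 1 ≤ n) (m s : ℂ)
    (α β : ℂ)
    (hα : α = (s ^ 2 - 1) * s ^ (2 * n) *
      (-(m ^ 6) * (s - 1) * s ^ 2 * (s ^ (2 * n + 1) + 1)
        + m ^ 4 * (s ^ (2 * n + 2) * (s ^ 4 - 2 * s ^ 2 + 3 * s - 1)
            + s ^ 4 - 3 * s ^ 3 + 2 * s ^ 2 - 1)
        - m ^ 2 * s * (s ^ (2 * n) * (2 * s ^ 3 - s ^ 2 + 1) - s * (s ^ 3 - s + 2))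
        + s ^ 2 * (s ^ (2 * n) - s ^ 2)))
    (hβ : β = m ^ 7 * s ^ (2 * n + 2) * (s ^ 2 - 1) * (s ^ 3 + 1)
        - m ^ 5 * s ^ 3 * (s ^ (4 * n) * (s ^ 3 - s ^ 2 + 1)
            + s ^ (2 * n - 2) * (s - 1) * (s ^ 3 + s + 1) * (s ^ 3 + s ^ 2 + 1)
            - (s ^ 3 - s + 1))
        + m ^ 3 * s ^ 2 * (s ^ 3 + 1) * (s ^ (2 * n) - 1) * (s ^ (2 * n) + s ^ 2)
        - m * s ^ 3 * (s ^ (2 * n) - s ^ 2) * (s ^ (2 * n) + s))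
    (r₀ : ℂ)
    (hr₀ : r₀ = m ^ 8 * (s - 1) * (s + 1) ^ 2 * (s ^ (2 * n) - s ^ 2) * s ^ (2 * n + 2)
      - m ^ 6 * (s ^ (6 * n + 3)
          + (2 * s ^ 6 + s ^ 5 - 4 * s ^ 4 + s ^ 3 + s ^ 2 - s - 1) * s ^ (4 * n + 1)
          - (s ^ 6 + s ^ 5 - s ^ 4 - s ^ 3 + 4 * s ^ 2 - s - 2) * s ^ (2 * n + 2)
          + s ^ 6)
      + m ^ 4 * ((s ^ 2 + 1) * s ^ (6 * n + 2)
          + (s ^ 6 + 2 * s ^ 5 - 3 * s ^ 4 - 2 * s ^ 3 + 6 * s ^ 2 - 4 * s - 2) * s ^ (4 * n + 3)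
          - (2 * s ^ 6 + 4 * s ^ 5 - 6 * s ^ 4 + 2 * s ^ 3 + 3 * s ^ 2 - 2 * s - 1) * s ^ (2 * n)
          + (s ^ 2 + 1) * s ^ 5)
      - m ^ 2 * (s ^ (6 * n + 3)
          + (2 * s ^ 6 + s ^ 5 - 4 * s ^ 4 + s ^ 3 + s ^ 2 - s - 1) * s ^ (4 * n + 1)
          - (s ^ 6 + s ^ 5 - s ^ 4 - s ^ 3 + 4 * s ^ 2 - s - 2) * s ^ (2 * n + 2)
          + s ^ 6)
      + (s - 1) * (s + 1) ^ 2 * (s ^ (2 * n) - s ^ 2) * s ^ (2 * n + 2))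
    (r₁ : ℂ)
    (hr₁ : r₁ = -(α ^ 2) * m * s * (m ^ 2 * s ^ (2 * n + 2) - m ^ 2 - s ^ (2 * n + 1) + s)
      + α * β * (m ^ 2 - 1) * (m ^ 2 + 1) * s ^ (2 * n + 1) * (s + 1)
      + β ^ 2 * m * s ^ (2 * n) * (m ^ 2 * s ^ (2 * n + 1) - m ^ 2 * s - s ^ (2 * n + 2) + 1))
    (h0 : r₀ = 0) :
    r₁ = 0 := by
  have hα' : α = alpha m s (s ^ (2 * n)) := by subst hα; unfold alpha; ring
  have hβ' : β = beta m s (s ^ (2 * n)) := by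
    subst hβ; unfold beta
    linear_combination (-m ^ 5 * s * (s - 1) * (s ^ 3 + s + 1) * (s ^ 3 + s ^ 2 + 1)) *
      pow_sub_mul_pow s (by omega : 2 ≤ 2 * n)
  have hr₀' : r₀ = r0 m s (s ^ (2 * n)) := by subst hr₀; unfold r0; ring
  have hr₁' : r₁ = r1 m s (s ^ (2 * n)) α β := by subst hr₁; unfold r1; ring
  rw [hr₁', hα', hβ', r1_eq_cofactor_mul_r0, ← hr₀', h0, mul_zero]

theorem pretzel_stmt3 (n : ℕ) (hn : 1 ≤ n) (m s : ℂ) (hm : m ≠ 0) (hs : s ≠ 0)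
    (hs1 : s + 1 ≠ 0) (hs2 : s ^ (2 * n + 1) + 1 ≠ 0)
    (α β : ℂ)
    (hα : α = (s ^ 2 - 1) * s ^ (2 * n) *
      (-(m ^ 6) * (s - 1) * s ^ 2 * (s ^ (2 * n + 1) + 1)
        + m ^ 4 * (s ^ (2 * n + 2) * (s ^ 4 - 2 * s ^ 2 + 3 * s - 1)
            + s ^ 4 - 3 * s ^ 3 + 2 * s ^ 2 - 1)
        - m ^ 2 * s * (s ^ (2 * n) * (2 * s ^ 3 - s ^ 2 + 1) - s * (s ^ 3 - s + 2))
        + s ^ 2 * (s ^ (2 * n) - s ^ 2)))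
    (hβ : β = m ^ 7 * s ^ (2 * n + 2) * (s ^ 2 - 1) * (s ^ 3 + 1)
        - m ^ 5 * s ^ 3 * (s ^ (4 * n) * (s ^ 3 - s ^ 2 + 1)
            + s ^ (2 * n - 2) * (s - 1) * (s ^ 3 + s + 1) * (s ^ 3 + s ^ 2 + 1)
            - (s ^ 3 - s + 1))
        + m ^ 3 * s ^ 2 * (s ^ 3 + 1) * (s ^ (2 * n) - 1) * (s ^ (2 * n) + s ^ 2)
        - m * s ^ 3 * (s ^ (2 * n) - s ^ 2) * (s ^ (2 * n) + s))
    (r₀ : ℂ)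
    (hr₀ : r₀ = m ^ 8 * (s - 1) * (s + 1) ^ 2 * (s ^ (2 * n) - s ^ 2) * s ^ (2 * n + 2)
      - m ^ 6 * (s ^ (6 * n + 3)
          + (2 * s ^ 6 + s ^ 5 - 4 * s ^ 4 + s ^ 3 + s ^ 2 - s - 1) * s ^ (4 * n + 1)
          - (s ^ 6 + s ^ 5 - s ^ 4 - s ^ 3 + 4 * s ^ 2 - s - 2) * s ^ (2 * n + 2)
          + s ^ 6)
      + m ^ 4 * ((s ^ 2 + 1) * s ^ (6 * n + 2)
          + (s ^ 6 + 2 * s ^ 5 - 3 * s ^ 4 - 2 * s ^ 3 + 6 * s ^ 2 - 4 * s - 2) * s ^ (4 * n + 3)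
          - (2 * s ^ 6 + 4 * s ^ 5 - 6 * s ^ 4 + 2 * s ^ 3 + 3 * s ^ 2 - 2 * s - 1) * s ^ (2 * n)
          + (s ^ 2 + 1) * s ^ 5)
      - m ^ 2 * (s ^ (6 * n + 3)
          + (2 * s ^ 6 + s ^ 5 - 4 * s ^ 4 + s ^ 3 + s ^ 2 - s - 1) * s ^ (4 * n + 1)
          - (s ^ 6 + s ^ 5 - s ^ 4 - s ^ 3 + 4 * s ^ 2 - s - 2) * s ^ (2 * n + 2)
          + s ^ 6)
      + (s - 1) * (s + 1) ^ 2 * (s ^ (2 * n) - s ^ 2) * s ^ (2 * n + 2))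
    (r₁ : ℂ)
    (hr₁ : r₁ = -(α ^ 2) * m * s * (m ^ 2 * s ^ (2 * n + 2) - m ^ 2 - s ^ (2 * n + 1) + s)
      + α * β * (m ^ 2 - 1) * (m ^ 2 + 1) * s ^ (2 * n + 1) * (s + 1)
      + β ^ 2 * m * s ^ (2 * n) * (m ^ 2 * s ^ (2 * n + 1) - m ^ 2 * s - s ^ (2 * n + 2) + 1))
    (h0 : r₀ = 0) :
    r₁ = 0 :=
  pretzel_stmt3_general n hn m s α β hα hβ r₀ hr₀ r₁ hr₁ h0
end

section
/- The group presented on generators a, b, x with the two relators ((axba(xb)⁻¹)⁻¹·x)·(xb·(axba(xb)⁻¹)⁻¹·(axb)⁻¹·xb)⁻¹ and x⁻¹·(axba(xb)⁻¹)^n is isomorphic to the group presented on generators a, c with the single relator (acac⁻¹)^(n−1)·(c·(acac⁻¹)⁻¹·(ac)⁻¹·c)⁻¹. -/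
open Matrix

def pretzelRels₃ (n : ℕ) : Set (FreeGroup (Fin 3)) :=
  let a := FreeGroup.of (0 : Fin 3)
  let b := FreeGroup.of (1 : Fin 3)
  let x := FreeGroup.of (2 : Fin 3)
  let w := a * x * b * a * (x * b)⁻¹
  {w⁻¹ * x * (x * b * w⁻¹ * (a * x * b)⁻¹ * (x * b))⁻¹, x⁻¹ * w ^ n}

def pretzelRels₂ (n : ℕ) : Set (FreeGroup (Fin 2)) :=
  let a := FreeGroup.of (0 : Fin 2)
  let c := FreeGroup.of (1 : Fin 2)
  let v := a * c * a * c⁻¹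
  {v ^ (n - 1) * (c * v⁻¹ * (a * c)⁻¹ * c)⁻¹}

lemma pretzel_mk_rel_eq_one {α : Type*} {rels : Set (FreeGroup α)} {r : FreeGroup α}
    (h : r ∈ rels) : PresentedGroup.mk rels r = 1 :=
  (QuotientGroup.eq_one_iff r).2 (Subgroup.subset_normalClosure h)

lemma pretzel_mk_of {α : Type*} {rels : Set (FreeGroup α)} (x : α) :
    PresentedGroup.mk rels (FreeGroup.of x) = PresentedGroup.of x := rfl

theorem pretzel_stmt7 (n : ℕ) (hn : 1 ≤ n) :
    Nonempty (PresentedGroup (pretzelRels₃ n) ≃* PresentedGroup (pretzelRels₂ n)) := by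
  obtain ⟨m, rfl⟩ : ∃ m, n = m + 1 := ⟨n - 1, (Nat.succ_pred_eq_of_pos hn).symm⟩
  set R3 := pretzelRels₃ (m + 1) with hR3
  set R2 := pretzelRels₂ (m + 1) with hR2
  have rel2 : ((PresentedGroup.of 0 * PresentedGroup.of 1 * PresentedGroup.of 0 *
      (PresentedGroup.of 1)⁻¹ : PresentedGroup R2)) ^ m *
      (PresentedGroup.of 1 *
        (PresentedGroup.of 0 * PresentedGroup.of 1 * PresentedGroup.of 0 *
          (PresentedGroup.of 1)⁻¹)⁻¹ *
        (PresentedGroup.of 0 * PresentedGroup.of 1)⁻¹ * PresentedGroup.of 1)⁻¹ = 1 := by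
    have h := pretzel_mk_rel_eq_one (rels := R2)
      (r := (FreeGroup.of 0 * FreeGroup.of 1 * FreeGroup.of 0 * (FreeGroup.of 1)⁻¹) ^ (m + 1 - 1) *
        (FreeGroup.of 1 *
          (FreeGroup.of 0 * FreeGroup.of 1 * FreeGroup.of 0 * (FreeGroup.of 1)⁻¹)⁻¹ *
          (FreeGroup.of 0 * FreeGroup.of 1)⁻¹ * FreeGroup.of 1)⁻¹)
      (by rw [hR2]; exact Set.mem_singleton _)
    simpa only [Nat.add_sub_cancel, _root_.map_mul, _root_.map_inv, _root_.map_pow,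
      pretzel_mk_of] using h
  have rel31 : ((PresentedGroup.of 0 * PresentedGroup.of 2 * PresentedGroup.of 1 *
        PresentedGroup.of 0 * (PresentedGroup.of 2 * PresentedGroup.of 1)⁻¹ :
        PresentedGroup R3))⁻¹ * PresentedGroup.of 2 *
      (PresentedGroup.of 2 * PresentedGroup.of 1 *
        (PresentedGroup.of 0 * PresentedGroup.of 2 * PresentedGroup.of 1 * PresentedGroup.of 0 *
          (PresentedGroup.of 2 * PresentedGroup.of 1)⁻¹)⁻¹ *
        (PresentedGroup.of 0 * PresentedGroup.of 2 * PresentedGroup.of 1)⁻¹ *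
        (PresentedGroup.of 2 * PresentedGroup.of 1))⁻¹ = 1 := by
    have h := pretzel_mk_rel_eq_one (rels := R3)
      (r := (FreeGroup.of 0 * FreeGroup.of 2 * FreeGroup.of 1 * FreeGroup.of 0 *
          (FreeGroup.of 2 * FreeGroup.of 1)⁻¹)⁻¹ * FreeGroup.of 2 *
        (FreeGroup.of 2 * FreeGroup.of 1 *
          (FreeGroup.of 0 * FreeGroup.of 2 * FreeGroup.of 1 * FreeGroup.of 0 *
            (FreeGroup.of 2 * FreeGroup.of 1)⁻¹)⁻¹ *
          (FreeGroup.of 0 * FreeGroup.of 2 * FreeGroup.of 1)⁻¹ *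
          (FreeGroup.of 2 * FreeGroup.of 1))⁻¹)
      (by rw [hR3]; exact Set.mem_insert _ _)
    simpa only [_root_.map_mul, _root_.map_inv, _root_.map_pow, pretzel_mk_of] using h
  have rel32 : ((PresentedGroup.of 2 : PresentedGroup R3))⁻¹ *
      (PresentedGroup.of 0 * PresentedGroup.of 2 * PresentedGroup.of 1 * PresentedGroup.of 0 *
        (PresentedGroup.of 2 * PresentedGroup.of 1)⁻¹) ^ (m + 1) = 1 := by
    have h := pretzel_mk_rel_eq_one (rels := R3)
      (r := (FreeGroup.of 2)⁻¹ * (FreeGroup.of 0 * FreeGroup.of 2 * FreeGroup.of 1 *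
        FreeGroup.of 0 * (FreeGroup.of 2 * FreeGroup.of 1)⁻¹) ^ (m + 1))
      (by rw [hR3]; exact Set.mem_insert_iff.2 (Or.inr rfl))
    simpa only [_root_.map_mul, _root_.map_inv, _root_.map_pow, pretzel_mk_of] using h
  set v2 : PresentedGroup R2 := PresentedGroup.of 0 * PresentedGroup.of 1 * PresentedGroup.of 0 *
    (PresentedGroup.of 1)⁻¹ with hv2
  set f : Fin 3 → PresentedGroup R2 :=
    ![PresentedGroup.of 0, (v2 ^ (m + 1))⁻¹ * PresentedGroup.of 1, v2 ^ (m + 1)] with hf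
  have hF : ∀ r ∈ R3, FreeGroup.lift f r = 1 := by
    intro r hr
    rw [hR3] at hr
    simp only [pretzelRels₃, Set.mem_insert_iff, Set.mem_singleton_iff] at hr
    rcases hr with rfl | rfl
    · simp only [_root_.map_mul, _root_.map_inv, _root_.map_pow, FreeGroup.lift_apply_of, hf,
        Matrix.cons_val_zero, Matrix.cons_val_one, Matrix.head_cons, Matrix.cons_val_two,
        Matrix.tail_cons]
      have hK2' : (PresentedGroup.of 1 * v2⁻¹ * (PresentedGroup.of 0 * PresentedGroup.of 1)⁻¹ *
          PresentedGroup.of 1 : PresentedGroup R2) = v2 ^ m := by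
        have h := rel2
        rw [mul_inv_eq_one] at h
        exact h.symm
      rw [hv2] at hK2' ⊢
      rw [pow_succ' (PresentedGroup.of 0 * PresentedGroup.of 1 * PresentedGroup.of 0 *
        (PresentedGroup.of 1 : PresentedGroup R2)⁻¹) m, ← hK2']
      group
    · simp only [_root_.map_mul, _root_.map_inv, _root_.map_pow, FreeGroup.lift_apply_of, hf,
        Matrix.cons_val_zero, Matrix.cons_val_one, Matrix.head_cons, Matrix.cons_val_two,
        Matrix.tail_cons]
      rw [hv2]
      group
  have e3 : (PresentedGroup.of 0 * (PresentedGroup.of 2 * PresentedGroup.of 1) *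
      PresentedGroup.of 0 * (PresentedGroup.of 2 * PresentedGroup.of 1)⁻¹ :
      PresentedGroup R3) =
      PresentedGroup.of 0 * PresentedGroup.of 2 * PresentedGroup.of 1 * PresentedGroup.of 0 *
      (PresentedGroup.of 2 * PresentedGroup.of 1)⁻¹ := by group
  set g : Fin 2 → PresentedGroup R3 :=
    ![PresentedGroup.of 0, PresentedGroup.of 2 * PresentedGroup.of 1] with hg
  have hG : ∀ r ∈ R2, FreeGroup.lift g r = 1 := by
    intro r hr
    rw [hR2] at hr
    simp only [pretzelRels₂, Set.mem_singleton_iff] at hr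
    subst hr
    simp only [_root_.map_mul, _root_.map_inv, _root_.map_pow, FreeGroup.lift_apply_of, hg,
      Matrix.cons_val_zero, Matrix.cons_val_one, Matrix.head_cons, Nat.add_sub_cancel]
    have hK : (PresentedGroup.of 0 * PresentedGroup.of 2 * PresentedGroup.of 1 *
        PresentedGroup.of 0 * (PresentedGroup.of 2 * PresentedGroup.of 1)⁻¹ :
        PresentedGroup R3)⁻¹ * PresentedGroup.of 2 =
        PresentedGroup.of 2 * PresentedGroup.of 1 *
        (PresentedGroup.of 0 * PresentedGroup.of 2 * PresentedGroup.of 1 * PresentedGroup.of 0 *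
          (PresentedGroup.of 2 * PresentedGroup.of 1)⁻¹)⁻¹ *
        (PresentedGroup.of 0 * PresentedGroup.of 2 * PresentedGroup.of 1)⁻¹ *
        (PresentedGroup.of 2 * PresentedGroup.of 1) := mul_inv_eq_one.mp rel31
    have hx : (PresentedGroup.of 2 : PresentedGroup R3) =
        (PresentedGroup.of 0 * PresentedGroup.of 2 * PresentedGroup.of 1 * PresentedGroup.of 0 *
          (PresentedGroup.of 2 * PresentedGroup.of 1)⁻¹) ^ (m + 1) := inv_mul_eq_one.mp rel32
    have hK2 : (PresentedGroup.of 2 * PresentedGroup.of 1 *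
        (PresentedGroup.of 0 * PresentedGroup.of 2 * PresentedGroup.of 1 * PresentedGroup.of 0 *
          (PresentedGroup.of 2 * PresentedGroup.of 1)⁻¹)⁻¹ *
        (PresentedGroup.of 0 * PresentedGroup.of 2 * PresentedGroup.of 1)⁻¹ *
        (PresentedGroup.of 2 * PresentedGroup.of 1) : PresentedGroup R3) =
        (PresentedGroup.of 0 * PresentedGroup.of 2 * PresentedGroup.of 1 * PresentedGroup.of 0 *
          (PresentedGroup.of 2 * PresentedGroup.of 1)⁻¹) ^ m := by
      rw [← hK, inv_mul_eq_iff_eq_mul]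
      exact hx.trans (pow_succ' _ m)
    rw [e3, ← hK2]
    group
  set F : PresentedGroup R3 →* PresentedGroup R2 := PresentedGroup.toGroup hF with hFdef
  set G : PresentedGroup R2 →* PresentedGroup R3 := PresentedGroup.toGroup hG with hGdef
  have hGF : G.comp F = MonoidHom.id _ := by
    ext i
    fin_cases i
    · show (G.comp F) (PresentedGroup.of (0 : Fin 3)) = PresentedGroup.of (0 : Fin 3)
      simp only [MonoidHom.comp_apply, hFdef, hGdef, PresentedGroup.toGroup.of, hf, hg,
        Matrix.cons_val_zero]
    · show (G.comp F) (PresentedGroup.of (1 : Fin 3)) = PresentedGroup.of (1 : Fin 3)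
      simp only [MonoidHom.comp_apply, hFdef, hGdef, PresentedGroup.toGroup.of, hf,
        Matrix.cons_val_one, Matrix.head_cons, hv2, _root_.map_mul, _root_.map_inv,
        _root_.map_pow, Matrix.cons_val_zero, hg]
      rw [e3, ← inv_mul_eq_one.mp rel32]
      group
    · show (G.comp F) (PresentedGroup.of (2 : Fin 3)) = PresentedGroup.of (2 : Fin 3)
      simp only [MonoidHom.comp_apply, hFdef, hGdef, PresentedGroup.toGroup.of, hf,
        Matrix.cons_val_two, Matrix.tail_cons, Matrix.head_cons, hv2, _root_.map_mul,
        _root_.map_inv, _root_.map_pow, Matrix.cons_val_zero, Matrix.cons_val_one, hg]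
      rw [e3]
      exact (inv_mul_eq_one.mp rel32).symm
  have hFG : F.comp G = MonoidHom.id _ := by
    ext i
    fin_cases i
    · show (F.comp G) (PresentedGroup.of (0 : Fin 2)) = PresentedGroup.of (0 : Fin 2)
      simp only [MonoidHom.comp_apply, hFdef, hGdef, PresentedGroup.toGroup.of, hg,
        Matrix.cons_val_zero, hf]
    · show (F.comp G) (PresentedGroup.of (1 : Fin 2)) = PresentedGroup.of (1 : Fin 2)
      simp only [MonoidHom.comp_apply, hFdef, hGdef, PresentedGroup.toGroup.of, hg,
        Matrix.cons_val_one, Matrix.head_cons, _root_.map_mul, hf, Matrix.cons_val_two,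
        Matrix.tail_cons, Matrix.cons_val_zero]
      group
  exact ⟨F.toMulEquiv G hGF hFG⟩
end

section
/- The matrix product X·B·X·B·A⁻¹ equals [[S^2·D₁/(γ₃·α), (m·s·D₁·D₂ − (sS^2+1)·(sS^2·D₁ + m·γ₃·α)·β^2)/((s+1)·γ₃·α·β^2)], [(s+1)·D₂/((sS^2+1)·γ₃·α), (m·s·S^2·D₁·D₂ + s·(sS^2+1)·(m^2·s·α^2 − S^2·β^2)·D₂)/(S^2·(sS^2+1)·γ₃·α·β^2) − m]]. -/
set_option maxHeartbeats 2000000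


open Matrix

theorem pretzel_stmt8 (n : ℕ) (hn : 1 ≤ n) (m s : ℂ) (hm : m ≠ 0) (hs : s ≠ 0)
    (hs1 : s + 1 ≠ 0) (hs2 : s ^ (2 * n + 1) + 1 ≠ 0)
    (α β : ℂ)
    (hα : α = (s ^ 2 - 1) * s ^ (2 * n) *
      (-(m ^ 6) * (s - 1) * s ^ 2 * (s ^ (2 * n + 1) + 1)
        + m ^ 4 * (s ^ (2 * n + 2) * (s ^ 4 - 2 * s ^ 2 + 3 * s - 1)
            + s ^ 4 - 3 * s ^ 3 + 2 * s ^ 2 - 1)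
        - m ^ 2 * s * (s ^ (2 * n) * (2 * s ^ 3 - s ^ 2 + 1) - s * (s ^ 3 - s + 2))
        + s ^ 2 * (s ^ (2 * n) - s ^ 2)))
    (hβ : β = m ^ 7 * s ^ (2 * n + 2) * (s ^ 2 - 1) * (s ^ 3 + 1)
        - m ^ 5 * s ^ 3 * (s ^ (4 * n) * (s ^ 3 - s ^ 2 + 1)
            + s ^ (2 * n - 2) * (s - 1) * (s ^ 3 + s + 1) * (s ^ 3 + s ^ 2 + 1)
            - (s ^ 3 - s + 1))
        + m ^ 3 * s ^ 2 * (s ^ 3 + 1) * (s ^ (2 * n) - 1) * (s ^ (2 * n) + s ^ 2)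
        - m * s ^ 3 * (s ^ (2 * n) - s ^ 2) * (s ^ (2 * n) + s))
    (hα0 : α ≠ 0) (hβ0 : β ≠ 0)
    (A B X : Matrix (Fin 2) (Fin 2) ℂ)
    (hA : A = !![m, -((m ^ 2 - s) * (s ^ (2 * n + 1) + 1)) / (m * (s + 1)); 0, m⁻¹])
    (hB : B = (s * α)⁻¹ • !![β, -((s * α - m * β) * (m * s * α - β)) / (m * β);
        β, (m * (m * s * α - β) + s * α) / m])
    (hX : X = !![s ^ n, (0 : ℂ); (s ^ n - (s ^ n)⁻¹) / (s ^ (2 * n + 1) + 1), (s ^ n)⁻¹])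
    (H η₁ η₂ : ℂ)
    (hH : H = 1 - m ^ 2 * s + m ^ 2 * s ^ (2 * n + 1) - s ^ (2 * n + 2))
    (hη₁ : η₁ = m * α - m * s ^ (2 * n + 1) * α + s ^ (2 * n) * β + m ^ 2 * s ^ (2 * n) * β)
    (hη₂ : η₂ = -(m * s * α) + m * s ^ (2 * n + 1) * α - s ^ (2 * n) * β - s ^ (2 * n + 1) * β)
    (γ₁ γ₂ γ₃ : ℂ)
    (hγ₁ : γ₁ = s * α - m * β) (hγ₂ : γ₂ = m * s * α - β)
    (hγ₃ : γ₃ = m ^ 2 * s * (s * (s ^ n) ^ 2 + 1) * α)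
    (D₁ D₂ : ℂ)
    (hD₁ : D₁ = -((s + 1) * α * γ₂) + m * (η₁ + γ₂ + m * (s ^ n) ^ 2 * γ₁) * β)
    (hD₂ : D₂ = -(α * η₂) + m * (s ^ n) ^ 2 * (η₁ + m * (s ^ n) ^ 2 * γ₁ + γ₂) * β) :
    X * B * X * B * A⁻¹
      = !![(s ^ n) ^ 2 * D₁ / (γ₃ * α),
            (m * s * D₁ * D₂ - (s * (s ^ n) ^ 2 + 1) * (s * (s ^ n) ^ 2 * D₁ + m * γ₃ * α) * β ^ 2)
              / ((s + 1) * γ₃ * α * β ^ 2);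
          (s + 1) * D₂ / ((s * (s ^ n) ^ 2 + 1) * γ₃ * α),
            (m * s * (s ^ n) ^ 2 * D₁ * D₂
                + s * (s * (s ^ n) ^ 2 + 1) * (m ^ 2 * s * α ^ 2 - (s ^ n) ^ 2 * β ^ 2) * D₂)
              / ((s ^ n) ^ 2 * (s * (s ^ n) ^ 2 + 1) * γ₃ * α * β ^ 2) - m] := by
  subst hη₁ hη₂ hγ₁ hγ₂ hγ₃ hD₁ hD₂
  have h2n : s ^ (2 * n) = (s ^ n) ^ 2 := by rw [mul_comm, pow_mul]
  have h2n1 : s ^ (2 * n + 1) = s * (s ^ n) ^ 2 := by rw [pow_succ, h2n]; ring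
  rw [h2n1] at hs2 hA hX
  have hT : (s ^ n : ℂ) ≠ 0 := pow_ne_zero _ hs
  rw [h2n, h2n1]
  clear hα hβ hH h2n h2n1
  generalize hTn : (s : ℂ) ^ n = T at hT hs2 hA hX ⊢
  have hAinv : A⁻¹ = (m * (s + 1))⁻¹ •
      !![s + 1, (m ^ 2 - s) * (s * T ^ 2 + 1); 0, m ^ 2 * (s + 1)] := by
    apply Matrix.inv_eq_right_inv
    rw [hA]
    ext i j
    fin_cases i <;> fin_cases j <;>
      simp only [Matrix.mul_apply, Fin.sum_univ_two, Matrix.smul_apply, Matrix.cons_val_zero,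
        Matrix.cons_val_one, Matrix.head_cons, Matrix.head_fin_const, Matrix.cons_val',
        Matrix.cons_val_fin_one, Matrix.empty_val', Matrix.of_apply, Fin.isValue, Fin.mk_zero,
        Fin.mk_one, Matrix.one_apply, smul_eq_mul] <;>
      norm_num <;> field_simp <;> ring
  have hX' : X = (T * (s * T ^ 2 + 1))⁻¹ •
      !![T ^ 2 * (s * T ^ 2 + 1), 0; T ^ 2 - 1, s * T ^ 2 + 1] := by
    rw [hX]
    have hs2' : 1 + T ^ 2 * s ≠ 0 := by rw [show 1 + T ^ 2 * s = s * T ^ 2 + 1 by ring]; exact hs2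
    ext i j
    fin_cases i <;> fin_cases j <;>
      simp only [Matrix.smul_apply, Matrix.cons_val_zero, Matrix.cons_val_one, Matrix.head_cons,
        Matrix.head_fin_const, Matrix.cons_val', Matrix.cons_val_fin_one, Matrix.empty_val',
        Matrix.of_apply, Fin.isValue, Fin.mk_zero, Fin.mk_one, smul_eq_mul] <;>
      field_simp <;> ring_nf <;> field_simp <;> ring
  have hB' : B = (s * α * (m * β))⁻¹ •
      !![m * β ^ 2, -((s * α - m * β) * (m * s * α - β));
         m * β ^ 2, β * (m * (m * s * α - β) + s * α)] := by
    rw [hB]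
    ext i j
    fin_cases i <;> fin_cases j <;>
      simp only [Matrix.smul_apply, Matrix.cons_val_zero, Matrix.cons_val_one, Matrix.head_cons,
        Matrix.head_fin_const, Matrix.cons_val', Matrix.cons_val_fin_one, Matrix.empty_val',
        Matrix.of_apply, Fin.isValue, Fin.mk_zero, Fin.mk_one, smul_eq_mul] <;>
      field_simp <;> ring
  rw [hAinv, hX', hB']
  simp only [Matrix.smul_mul, Matrix.mul_smul, smul_smul, ← mul_inv]
  ext i j
  fin_cases i <;> fin_cases j <;>
    simp only [Matrix.smul_apply, Matrix.mul_apply, Fin.sum_univ_two, Matrix.cons_val_zero,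
      Matrix.cons_val_one, Matrix.head_cons, Matrix.head_fin_const, Matrix.cons_val',
      Matrix.cons_val_fin_one, Matrix.empty_val', Matrix.of_apply, Fin.isValue, Fin.mk_zero,
      Fin.mk_one, Matrix.sub_apply, smul_eq_mul, inv_mul_eq_div]
  · rw [div_eq_div_iff (by simp [mul_eq_zero, hT, hs2, hs, hm, hs1, hα0, hβ0]) (by simp [mul_eq_zero, hT, hs2, hs, hm, hs1, hα0, hβ0])]
    ring
  · rw [div_eq_div_iff (by simp [mul_eq_zero, hT, hs2, hs, hm, hs1, hα0, hβ0]) (by simp [mul_eq_zero, hT, hs2, hs, hm, hs1, hα0, hβ0])]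
    ring
  · rw [div_eq_div_iff (by simp [mul_eq_zero, hT, hs2, hs, hm, hs1, hα0, hβ0]) (by simp [mul_eq_zero, hT, hs2, hs, hm, hs1, hα0, hβ0])]
    ring
  · rw [eq_sub_iff_add_eq, div_add' _ _ _ (by simp [mul_eq_zero, hT, hs2, hs, hm, hs1, hα0, hβ0]), div_eq_div_iff (by simp [mul_eq_zero, hT, hs2, hs, hm, hs1, hα0, hβ0]) (by simp [mul_eq_zero, hT, hs2, hs, hm, hs1, hα0, hβ0])]
    ring
end

section
/- (Factorization of ζ₂) The identity H·m^2·s·(m·α − m·s^2·α + s·β + s^(2n)·β) − (s^2−1)·(m^2·η₁ + m^2·s^3·η₁ + s·η₂ + m^2·s·η₂) = m·( (m^2·(s^2−s+1) − s)·(s^(2n+3)+1) − H·s·(s−1) )·r₀ holds for all complex numbers m and s. -/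
open Matrix

theorem pretzel_stmt16 (n : ℕ) (hn : 1 ≤ n) (m s : ℂ)
    (α β : ℂ)
    (hα : α = (s ^ 2 - 1) * s ^ (2 * n) *
      (-(m ^ 6) * (s - 1) * s ^ 2 * (s ^ (2 * n + 1) + 1)
        + m ^ 4 * (s ^ (2 * n + 2) * (s ^ 4 - 2 * s ^ 2 + 3 * s - 1)
            + s ^ 4 - 3 * s ^ 3 + 2 * s ^ 2 - 1)
        - m ^ 2 * s * (s ^ (2 * n) * (2 * s ^ 3 - s ^ 2 + 1) - s * (s ^ 3 - s + 2))
        + s ^ 2 * (s ^ (2 * n) - s ^ 2)))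
    (hβ : β = m ^ 7 * s ^ (2 * n + 2) * (s ^ 2 - 1) * (s ^ 3 + 1)
        - m ^ 5 * s ^ 3 * (s ^ (4 * n) * (s ^ 3 - s ^ 2 + 1)
            + s ^ (2 * n - 2) * (s - 1) * (s ^ 3 + s + 1) * (s ^ 3 + s ^ 2 + 1)
            - (s ^ 3 - s + 1))
        + m ^ 3 * s ^ 2 * (s ^ 3 + 1) * (s ^ (2 * n) - 1) * (s ^ (2 * n) + s ^ 2)
        - m * s ^ 3 * (s ^ (2 * n) - s ^ 2) * (s ^ (2 * n) + s))
    (r₀ : ℂ)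
    (hr₀ : r₀ = m ^ 8 * (s - 1) * (s + 1) ^ 2 * (s ^ (2 * n) - s ^ 2) * s ^ (2 * n + 2)
      - m ^ 6 * (s ^ (6 * n + 3)
          + (2 * s ^ 6 + s ^ 5 - 4 * s ^ 4 + s ^ 3 + s ^ 2 - s - 1) * s ^ (4 * n + 1)
          - (s ^ 6 + s ^ 5 - s ^ 4 - s ^ 3 + 4 * s ^ 2 - s - 2) * s ^ (2 * n + 2)
          + s ^ 6)
      + m ^ 4 * ((s ^ 2 + 1) * s ^ (6 * n + 2)
          + (s ^ 6 + 2 * s ^ 5 - 3 * s ^ 4 - 2 * s ^ 3 + 6 * s ^ 2 - 4 * s - 2) * s ^ (4 * n + 3)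
          - (2 * s ^ 6 + 4 * s ^ 5 - 6 * s ^ 4 + 2 * s ^ 3 + 3 * s ^ 2 - 2 * s - 1) * s ^ (2 * n)
          + (s ^ 2 + 1) * s ^ 5)
      - m ^ 2 * (s ^ (6 * n + 3)
          + (2 * s ^ 6 + s ^ 5 - 4 * s ^ 4 + s ^ 3 + s ^ 2 - s - 1) * s ^ (4 * n + 1)
          - (s ^ 6 + s ^ 5 - s ^ 4 - s ^ 3 + 4 * s ^ 2 - s - 2) * s ^ (2 * n + 2)
          + s ^ 6)
      + (s - 1) * (s + 1) ^ 2 * (s ^ (2 * n) - s ^ 2) * s ^ (2 * n + 2))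
    (H η₁ η₂ : ℂ)
    (hH : H = 1 - m ^ 2 * s + m ^ 2 * s ^ (2 * n + 1) - s ^ (2 * n + 2))
    (hη₁ : η₁ = m * α - m * s ^ (2 * n + 1) * α + s ^ (2 * n) * β + m ^ 2 * s ^ (2 * n) * β)
    (hη₂ : η₂ = -(m * s * α) + m * s ^ (2 * n + 1) * α - s ^ (2 * n) * β - s ^ (2 * n + 1) * β) :
    H * m ^ 2 * s * (m * α - m * s ^ 2 * α + s * β + s ^ (2 * n) * β)
      - (s ^ 2 - 1) * (m ^ 2 * η₁ + m ^ 2 * s ^ 3 * η₁ + s * η₂ + m ^ 2 * s * η₂)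
      = m * ((m ^ 2 * (s ^ 2 - s + 1) - s) * (s ^ (2 * n + 3) + 1) - H * s * (s - 1)) * r₀ := by
  -- Writing `n = k + 1` removes the truncated subtraction in `2 * n - 2`; what is left is a
  -- polynomial identity in `m`, `s` and `s ^ k`.
  obtain ⟨k, rfl⟩ := Nat.exists_eq_add_of_le' hn
  rw [show 2 * (k + 1) - 2 = 2 * k by omega] at hβ
  subst hα hβ hr₀ hH hη₁ hη₂
  ring
end
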